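/- Let I be the two-sided ideal of B generated by x_1,…,x_{n−1}. Then B/I is isomorphic as a k-algebra to the commutative polynomial algebra k[X,Z] in two variables, via x_n ↦ X and z ↦ Z. -/

import Mathlib

/-!
STATEMENT 11: Let I be the two-sided ideal of B generated by x_1,…,x_{n−1}.
Then B/I is isomorphic as a k-algebra to the commutative polynomial algebra
k[X,Z] in two variables, via x_n ↦ X and z ↦ Z.
-/

open TensorProduct Matrix

noncomputable section

variable (k : Type) [Field k] (n : ℕ)

/-- The standard basis of `V = k^n`. -/
def x (i : Fin n) : Fin n → k := Pi.single i 1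

/-- `V̂ = V ⊕ k·z`. -/
abbrev Vhat (k : Type) [Field k] (n : ℕ) := (Fin n → k) × k

/-- The inclusion `V → V̂`. -/
def inc : (Fin n → k) →ₗ[k] Vhat k n := LinearMap.inl k (Fin n → k) k

/-- The extra degree-one generator `z ∈ V̂`. -/
def zv : Vhat k n := (0, 1)

/-- The multiplication embedding `V̂ ⊗ V̂ → T(V̂)`. -/
def emb2 : (Vhat k n) ⊗[k] (Vhat k n) →ₗ[k] TensorAlgebra k (Vhat k n) :=
  LinearMap.mul' k (TensorAlgebra k (Vhat k n)) ∘ₗ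
    TensorProduct.map (TensorAlgebra.ι k) (TensorAlgebra.ι k)

/-- The multiplication embedding `V ⊗ V → T(V)`. -/
def embV : (Fin n → k) ⊗[k] (Fin n → k) →ₗ[k] TensorAlgebra k (Fin n → k) :=
  LinearMap.mul' k (TensorAlgebra k (Fin n → k)) ∘ₗ
    TensorProduct.map (TensorAlgebra.ι k) (TensorAlgebra.ι k)

variable (M : Matrix (Fin n) (Fin n) k)

/-- The relation `r = Σ m_ij x_i ⊗ x_j` as an element of `T(V)`. -/
def rTV : TensorAlgebra k (Fin n → k) :=
  ∑ i : Fin n, ∑ j : Fin n,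
    M i j • (TensorAlgebra.ι k (x k n i) * TensorAlgebra.ι k (x k n j))

/-- The relation `r` viewed inside `T(V̂)`. -/
def rhat : TensorAlgebra k (Vhat k n) :=
  ∑ i : Fin n, ∑ j : Fin n,
    M i j • (TensorAlgebra.ι k (inc k n (x k n i)) * TensorAlgebra.ι k (inc k n (x k n j)))

variable (δ₀ : (Fin n → k) →ₗ[k] (Fin n → k) ⊗[k] (Fin n → k))

/-- The Ore relation `r_i = z⊗x_i − x_i⊗z − δ(x_i)` inside `T(V̂)`. -/
def relz (i : Fin n) : TensorAlgebra k (Vhat k n) :=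
  TensorAlgebra.ι k (zv k n) * TensorAlgebra.ι k (inc k n (x k n i))
    - TensorAlgebra.ι k (inc k n (x k n i)) * TensorAlgebra.ι k (zv k n)
    - emb2 k n (TensorProduct.map (inc k n) (inc k n) (δ₀ (x k n i)))

/-- The defining relations of `B = T(V̂)/⟨r, r₁, …, r_n⟩`. -/
def OreRel (a b : TensorAlgebra k (Vhat k n)) : Prop :=
  (a = rhat k n M ∨ ∃ i : Fin n, a = relz k n δ₀ i) ∧ b = 0

/-- `B = A[z;δ̄] ≅ T(V̂)/⟨r, r₁, …, r_n⟩`. -/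
abbrev B := RingQuot (OreRel k n M δ₀)

/-- The projection `π : T(V̂) → B`. -/
def πB : TensorAlgebra k (Vhat k n) →ₐ[k] B k n M δ₀ :=
  RingQuot.mkAlgHom k (OreRel k n M δ₀)

/-- The standard `n×n` anti-symmetric matrix (`n` even), with `m_{i,n+1−i} = 1`
for `1 ≤ i ≤ n/2`, `m_{i,n+1−i} = −1` for `n/2 < i ≤ n` and all other
entries `0` (here written with `0`-based indices). -/
def Mstd (m : ℕ) (hn : n = 2 * m) : Matrix (Fin n) (Fin n) k :=
  fun i j => if (i : ℕ) + (j : ℕ) + 1 = n then (if (i : ℕ) < m then 1 else -1) else 0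

/-- The image of the generator `x_i` in `B`. -/
def xB (i : Fin n) : B k n M δ₀ :=
  πB k n M δ₀ (TensorAlgebra.ι k (inc k n (x k n i)))

/-- The image of `z` in `B`. -/
def zB : B k n M δ₀ := πB k n M δ₀ (TensorAlgebra.ι k (zv k n))

/-- The relations defining `B/I`, `I = ⟨x_1, …, x_{n−1}⟩`. -/
def RelI (a b : B k n M δ₀) : Prop :=
  (∃ i : Fin n, (i : ℕ) < n - 1 ∧ a = xB k n M δ₀ i) ∧ b = 0

/-!
The algebra map `T(V̂) → k[X, Z]` with `x_n ↦ X`, `z ↦ Z` and `x_i ↦ 0` for `i < n` kills `r`,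
whose `x_n ⊗ x_n` coefficient is `0`, and every `r_i`, because `k^i_nn = 0`; as it also kills
`x_1, …, x_{n-1}`, it factors through `B/I`. In `B/I` the classes of `x_n` and `z` generate,
and they commute: the relation `r_n` reads `z x_n - x_n z = k^n_nn x_n²` there. Hence
`X ↦ x_n, Z ↦ z` is a two-sided inverse of the induced map.
-/

open MvPolynomial

open scoped IsMulCommutative in
theorem MvPolynomial.bijective_of_adjoin_eq_top {R A σ : Type*} [CommSemiring R] [Semiring A]
    [Algebra R A] (a : σ → A) (hcomm : ∀ i j, Commute (a i) (a j))
    (hgen : Algebra.adjoin R (Set.range a) = ⊤)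
    (F : A →ₐ[R] MvPolynomial σ R) (hF : ∀ i, F (a i) = X i) : Function.Bijective F := by
  have := Algebra.isMulCommutative_adjoin R (s := Set.range a) (by
    rintro _ ⟨i, rfl⟩ _ ⟨j, rfl⟩; exact hcomm i j)
  let G : MvPolynomial σ R →ₐ[R] A :=
    (Algebra.adjoin R (Set.range a)).val.comp
      (aeval fun i => ⟨a i, Algebra.subset_adjoin ⟨i, rfl⟩⟩)
  have hG : ∀ i, G (X i) = a i := fun i => by simp [G]
  have hFG : Function.LeftInverse F G :=
    DFunLike.congr_fun (show F.comp G = AlgHom.id R _ from algHom_ext fun i => by simp [hG, hF])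
  have hG_surj : Function.Surjective G := by
    rw [← AlgHom.range_eq_top, eq_top_iff, ← hgen]
    exact Algebra.adjoin_le (Set.range_subset_iff.2 fun i => ⟨X i, hG i⟩)
  exact Function.bijective_iff_has_inverse.2 ⟨G, hFG.rightInverse_of_surjective hG_surj, hFG⟩

theorem Mstd_apply_self_eq_zero (m : ℕ) (hn : n = 2 * m) (i : Fin n) : Mstd k n m hn i i = 0 :=
  if_neg (by omega)

section

variable {k n M δ₀}

def toPoly (xn : Fin n) : TensorAlgebra k (Vhat k n) →ₐ[k] MvPolynomial (Fin 2) k :=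
  TensorAlgebra.lift k <|
    (LinearMap.proj xn ∘ₗ LinearMap.fst k _ k).smulRight (X 0) +
      (LinearMap.snd k _ k).smulRight (X 1)

theorem toPoly_ι (xn : Fin n) (v : Vhat k n) :
    toPoly xn (TensorAlgebra.ι k v) = v.1 xn • X 0 + v.2 • X 1 := by
  simp [toPoly]

theorem toPoly_ι_inc_x (xn i : Fin n) :
    toPoly xn (TensorAlgebra.ι k (inc k n (x k n i))) = if xn = i then X 0 else 0 := by
  simp [toPoly_ι, inc, x, Pi.single_apply]

theorem toPoly_ι_zv (xn : Fin n) : toPoly xn (TensorAlgebra.ι k (zv k n)) = X 1 := by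
  simp [toPoly_ι, zv]

theorem toPoly_quadratic (xn : Fin n) (c : Fin n → Fin n → k) :
    toPoly xn (∑ i, ∑ j, c i j •
      (TensorAlgebra.ι k (inc k n (x k n i)) * TensorAlgebra.ι k (inc k n (x k n j)))) =
      c xn xn • (X 0 * X 0) := by
  simp [toPoly_ι_inc_x, mul_ite, ite_mul]

theorem relz_eq {K : Fin n → Fin n → Fin n → k}
    (hK : ∀ i, δ₀ (x k n i) = ∑ s, ∑ t, K i s t • (x k n s ⊗ₜ x k n t)) (i : Fin n) :
    relz k n δ₀ i =
      TensorAlgebra.ι k (zv k n) * TensorAlgebra.ι k (inc k n (x k n i))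
        - TensorAlgebra.ι k (inc k n (x k n i)) * TensorAlgebra.ι k (zv k n)
        - ∑ s, ∑ t, K i s t •
          (TensorAlgebra.ι k (inc k n (x k n s)) * TensorAlgebra.ι k (inc k n (x k n t))) := by
  simp [relz, hK, emb2]

theorem toPoly_eq_of_oreRel {xn : Fin n} (hM : M xn xn = 0) {K : Fin n → Fin n → Fin n → k}
    (hK : ∀ i, δ₀ (x k n i) = ∑ s, ∑ t, K i s t • (x k n s ⊗ₜ x k n t))
    (hKnn : ∀ i, K i xn xn = 0) {a b : TensorAlgebra k (Vhat k n)} (h : OreRel k n M δ₀ a b) :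
    toPoly xn a = toPoly xn b := by
  obtain ⟨rfl | ⟨i, rfl⟩, rfl⟩ := h
  · rw [map_zero]
    exact (toPoly_quadratic xn M).trans (by rw [hM, zero_smul])
  · rw [relz_eq hK, map_sub, map_sub, toPoly_quadratic, hKnn, zero_smul, sub_zero, map_mul,
      map_mul, toPoly_ι_zv, mul_comm, sub_self, map_zero]

abbrev πI : B k n M δ₀ →ₐ[k] RingQuot (RelI k n M δ₀) := RingQuot.mkAlgHom k (RelI k n M δ₀)

theorem exists_toPoly_factorization {xn : Fin n} (hxn : (xn : ℕ) = n - 1) (hM : M xn xn = 0)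
    {K : Fin n → Fin n → Fin n → k}
    (hK : ∀ i, δ₀ (x k n i) = ∑ s, ∑ t, K i s t • (x k n s ⊗ₜ x k n t))
    (hKnn : ∀ i, K i xn xn = 0) :
    ∃ F : RingQuot (RelI k n M δ₀) →ₐ[k] MvPolynomial (Fin 2) k,
      ∀ t, F (πI (πB k n M δ₀ t)) = toPoly xn t := by
  let F₁ : B k n M δ₀ →ₐ[k] MvPolynomial (Fin 2) k :=
    RingQuot.liftAlgHom k ⟨toPoly xn, fun _ _ h => toPoly_eq_of_oreRel hM hK hKnn h⟩
  have hF₁ : ∀ t, F₁ (πB k n M δ₀ t) = toPoly xn t := RingQuot.liftAlgHom_mkAlgHom_apply k _ _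
  have hrel : ∀ ⦃a b⦄, RelI k n M δ₀ a b → F₁ a = F₁ b := by
    rintro _ _ ⟨⟨i, hi, rfl⟩, rfl⟩
    rw [xB, hF₁, toPoly_ι_inc_x, if_neg (by omega), map_zero]
  refine ⟨RingQuot.liftAlgHom k ⟨F₁, hrel⟩, fun t => ?_⟩
  rw [RingQuot.liftAlgHom_mkAlgHom_apply, hF₁]

theorem πI_xB_eq_zero {xn : Fin n} (hxn : (xn : ℕ) = n - 1) {i : Fin n} (hi : i ≠ xn) :
    πI (xB k n M δ₀ i) = 0 := by
  have hi' : (i : ℕ) < n - 1 := by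
    have := Fin.val_ne_of_ne hi
    omega
  simpa using RingQuot.mkAlgHom_rel k (s := RelI k n M δ₀) ⟨⟨i, hi', rfl⟩, rfl⟩

theorem zB_mul_xB_sub {K : Fin n → Fin n → Fin n → k}
    (hK : ∀ i, δ₀ (x k n i) = ∑ s, ∑ t, K i s t • (x k n s ⊗ₜ x k n t)) (i : Fin n) :
    zB k n M δ₀ * xB k n M δ₀ i - xB k n M δ₀ i * zB k n M δ₀ =
      ∑ s, ∑ t, K i s t • (xB k n M δ₀ s * xB k n M δ₀ t) := by
  have h := RingQuot.mkAlgHom_rel k (s := OreRel k n M δ₀) ⟨Or.inr ⟨i, rfl⟩, rfl⟩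
  rw [relz_eq hK] at h
  simp only [map_zero, map_sub, map_mul, map_sum, map_smul] at h
  exact sub_eq_zero.1 h

theorem πI_quadratic {xn : Fin n} (hxn : (xn : ℕ) = n - 1) (c : Fin n → Fin n → k) :
    πI (∑ s, ∑ t, c s t • (xB k n M δ₀ s * xB k n M δ₀ t)) =
      c xn xn • (πI (xB k n M δ₀ xn) * πI (xB k n M δ₀ xn)) := by
  simp only [map_sum, map_smul, map_mul]
  rw [Fintype.sum_eq_single xn fun s hs => by simp [πI_xB_eq_zero hxn hs],
    Fintype.sum_eq_single xn fun t ht => by simp [πI_xB_eq_zero hxn ht]]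

theorem commute_πI_xB_zB {xn : Fin n} (hxn : (xn : ℕ) = n - 1) {K : Fin n → Fin n → Fin n → k}
    (hK : ∀ i, δ₀ (x k n i) = ∑ s, ∑ t, K i s t • (x k n s ⊗ₜ x k n t)) (hKnn : K xn xn xn = 0) :
    Commute (πI (xB k n M δ₀ xn)) (πI (zB k n M δ₀)) := by
  have h := congrArg πI (zB_mul_xB_sub (M := M) hK xn)
  rw [πI_quadratic hxn, hKnn, zero_smul, map_sub, map_mul, map_mul, sub_eq_zero] at h
  exact h.symm

theorem πI_πB_ι {xn : Fin n} (hxn : (xn : ℕ) = n - 1) (v : Vhat k n) :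
    πI (πB k n M δ₀ (TensorAlgebra.ι k v)) =
      v.1 xn • πI (xB k n M δ₀ xn) + v.2 • πI (zB k n M δ₀) := by
  have hv : v = ∑ i, v.1 i • inc k n (x k n i) + v.2 • zv k n := by
    ext j <;> simp [inc, zv, x, Prod.fst_sum, Prod.snd_sum, Finset.sum_apply, Pi.single_apply]
  conv_lhs => rw [hv]
  simp only [map_add, map_sum, map_smul]
  rw [Fintype.sum_eq_single xn fun i hi => by rw [← xB, πI_xB_eq_zero hxn hi, smul_zero]]
  rfl

theorem adjoin_πI_xB_zB_eq_top {xn : Fin n} (hxn : (xn : ℕ) = n - 1) :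
    Algebra.adjoin k (Set.range ![πI (xB k n M δ₀ xn), πI (zB k n M δ₀)]) = ⊤ := by
  let Ψ := (πI (M := M) (δ₀ := δ₀)).comp (πB k n M δ₀)
  have hΨ : Function.Surjective Ψ :=
    (RingQuot.mkAlgHom_surjective k _).comp (RingQuot.mkAlgHom_surjective k _)
  rw [eq_top_iff, ← Ψ.range_eq_top.2 hΨ, ← Algebra.map_top, ← TensorAlgebra.adjoin_range_ι,
    AlgHom.map_adjoin, Algebra.adjoin_le_iff]
  rintro _ ⟨_, ⟨v, rfl⟩, rfl⟩
  have hgen : ∀ i, ![πI (xB k n M δ₀ xn), πI (zB k n M δ₀)] i ∈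
      Algebra.adjoin k (Set.range ![πI (xB k n M δ₀ xn), πI (zB k n M δ₀)]) :=
    fun i => Algebra.subset_adjoin ⟨i, rfl⟩
  rw [AlgHom.comp_apply, πI_πB_ι hxn]
  exact add_mem (Subalgebra.smul_mem _ (hgen 0) _) (Subalgebra.smul_mem _ (hgen 1) _)

end

theorem quotient_by_xi_is_polynomial_ring
    (m : ℕ) (hn : n = 2 * m)
    (hM : M = Mstd k n m hn)
    (K : Fin n → Fin n → Fin n → k)
    (hK : ∀ i, δ₀ (x k n i) = ∑ s : Fin n, ∑ t : Fin n, K i s t • (x k n s ⊗ₜ x k n t))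
    (xn : Fin n) (hxn : (xn : ℕ) = n - 1)
    (hKnn : ∀ i : Fin n, K i xn xn = 0) :
    ∃ e : RingQuot (RelI k n M δ₀) ≃ₐ[k] MvPolynomial (Fin 2) k,
      e (RingQuot.mkAlgHom k (RelI k n M δ₀) (xB k n M δ₀ xn)) = MvPolynomial.X 0
      ∧ e (RingQuot.mkAlgHom k (RelI k n M δ₀) (zB k n M δ₀)) = MvPolynomial.X 1 := by
  have hMnn : M xn xn = 0 := hM ▸ Mstd_apply_self_eq_zero k n m hn xn
  obtain ⟨F, hF⟩ := exists_toPoly_factorization hxn hMnn hK hKnn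
  let gen := ![πI (xB k n M δ₀ xn), πI (zB k n M δ₀)]
  have hFgen : ∀ i, F (gen i) = X i := Fin.forall_fin_two.2
    ⟨(hF _).trans (by rw [toPoly_ι_inc_x, if_pos rfl]), (hF _).trans (toPoly_ι_zv xn)⟩
  have hcomm := commute_πI_xB_zB (M := M) hxn hK (hKnn xn)
  have hgen_comm : ∀ i j, Commute (gen i) (gen j) := Fin.forall_fin_two.2
    ⟨Fin.forall_fin_two.2 ⟨.refl _, hcomm⟩, Fin.forall_fin_two.2 ⟨hcomm.symm, .refl _⟩⟩
  have hbij := MvPolynomial.bijective_of_adjoin_eq_top gen hgen_comm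
    (adjoin_πI_xB_zB_eq_top hxn) F hFgen
  exact ⟨AlgEquiv.ofBijective F hbij, hFgen 0, hFgen 1⟩
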